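/- arXiv:2004.08551 — 3 statements merged into one kernel-verified Lean document; each statement's English description precedes it below -/
import Mathlib

section
/- Let A be a unital ring and n ≥ 2. The homomorphism st : St(n, A) → GL(n, A) restricts to an isomorphism of the subgroup U⁺ = ⟨x_{ij}(a) : i < j⟩ of the Steinberg group onto the group of upper unitriangular matrices in GL(n, A). -/
/-- Generators of the Steinberg group: triples `(i, j, a)` with `i ≠ j` and `a ∈ A`. -/
def SteinbergGen (n : ℕ) (A : Type*) : Type _ :=
  {p : Fin n × Fin n // p.1 ≠ p.2} × A

/-- The free-group generator corresponding to `x_{ij}(a)`. -/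
def xgen {n : ℕ} {A : Type*} (i j : Fin n) (hij : i ≠ j) (a : A) :
    FreeGroup (SteinbergGen n A) :=
  FreeGroup.of (⟨(i, j), hij⟩, a)

open scoped commutatorElement

/-- The Steinberg relations, as elements of the free group that are set to `1`. -/
def SteinbergRels (n : ℕ) (A : Type*) [Ring A] : Set (FreeGroup (SteinbergGen n A)) :=
  {r | (∃ (i j : Fin n) (hij : i ≠ j) (a b : A),
          r = xgen i j hij a * xgen i j hij b * (xgen i j hij (a + b))⁻¹) ∨
       (∃ (i j k l : Fin n) (hij : i ≠ j) (hkl : k ≠ l) (_ : j ≠ k) (_ : i ≠ l) (a b : A),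
          r = ⁅xgen i j hij a, xgen k l hkl b⁆) ∨
       (∃ (i j k : Fin n) (hij : i ≠ j) (hjk : j ≠ k) (hik : i ≠ k) (a b : A),
          r = ⁅xgen i j hij a, xgen j k hjk b⁆ * (xgen i k hik (a * b))⁻¹)}

/-- The Steinberg group `St(n, A)`, presented by the generators `x_{ij}(a)` subject to the
Steinberg relations. -/
def Steinberg (n : ℕ) (A : Type*) [Ring A] : Type _ :=
  PresentedGroup (SteinbergRels n A)

instance (n : ℕ) (A : Type*) [Ring A] : Group (Steinberg n A) :=
  inferInstanceAs (Group (PresentedGroup (SteinbergRels n A)))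

/-- The generator `x_{ij}(a)` of the Steinberg group. -/
def st_x {n : ℕ} {A : Type*} [Ring A] (i j : Fin n) (hij : i ≠ j) (a : A) :
    Steinberg n A :=
  PresentedGroup.of (⟨(i, j), hij⟩, a)

set_option maxHeartbeats 1000000

open Matrix

/-- The elementary transvection `t_{ij}(a) = 1 + a·E_{ij}` (for `i ≠ j`) as an invertible
`n × n` matrix, with inverse `t_{ij}(-a)`. -/
def transvection' {n : ℕ} {A : Type*} [Ring A] (i j : Fin n) (hij : i ≠ j) (a : A) :
    (Matrix (Fin n) (Fin n) A)ˣ where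
  val := 1 + single i j a
  inv := 1 + single i j (-a)
  val_inv := by
    simp only [Matrix.mul_add, Matrix.add_mul, Matrix.one_mul, Matrix.mul_one,
      single_mul_single_of_ne _ _ _ _ (Ne.symm hij)]
    simp only [add_zero]; rw [add_assoc, ← single_add]
    simp
  inv_val := by
    simp only [Matrix.mul_add, Matrix.add_mul, Matrix.one_mul, Matrix.mul_one,
      single_mul_single_of_ne _ _ _ _ (Ne.symm hij)]
    simp only [add_zero]; rw [add_assoc, ← single_add]
    simp

/-- The subgroup `U⁺` of the Steinberg group generated by the `x_{ij}(a)` with `i < j`. -/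
def Uplus (n : ℕ) (A : Type*) [Ring A] : Subgroup (Steinberg n A) :=
  Subgroup.closure {g | ∃ (i j : Fin n) (hij : i < j) (a : A), g = st_x i j hij.ne a}

/-- The set of upper unitriangular invertible matrices. -/
def UnitriSet (n : ℕ) (A : Type*) [Ring A] : Set ((Matrix (Fin n) (Fin n) A)ˣ) :=
  {u | (∀ i : Fin n, u.val i i = 1) ∧
       ∀ i j : Fin n, j < i → u.val i j = 0}

/-!
Let `σ = upperSection` send an upper unitriangular matrix `M` to the element
`∏_{c = n-1, …, 0} ∏_{i < c} x_{ic}(M i c)` of `U⁺`, columns taken in decreasing order.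
Under `st` this product is `M`, because `E_{ic} E_{jd} = 0` whenever `j < d < c`.
Conversely, for `p < q` the Steinberg relations move `x_{pq}(a)` to the right through the
columns `c > q`, each time turning `x_{qc}(b)` into `x_{pc}(a b) x_{qc}(b)`, until it is absorbed
by column `q`; this shows `σ (t_{pq}(a) M) = x_{pq}(a) σ M`. Induction over `U⁺` then gives
`σ (st g) = g`, so `st` is a bijection from `U⁺` onto the unitriangular matrices.
-/

theorem Finset.noncommProd_one_add_of_mul_eq_zero {ι R : Type*} [Semiring R] (s : Finset ι)
    (e : ι → R) (he : ∀ i ∈ s, ∀ j ∈ s, e i * e j = 0) (comm) :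
    s.noncommProd (fun i => 1 + e i) comm = 1 + ∑ i ∈ s, e i := by
  induction s using Finset.cons_induction with
  | empty => simp
  | cons a s ha ih =>
    have hzero : e a * ∑ j ∈ s, e j = 0 := by
      rw [Finset.mul_sum]
      exact Finset.sum_eq_zero fun j hj => he a (mem_cons_self a s) j (mem_cons_of_mem hj)
    rw [Finset.noncommProd_cons, Finset.sum_cons,
      ih fun i hi j hj => he i (mem_cons_of_mem hi) j (mem_cons_of_mem hj),
      add_mul, one_mul, mul_add, mul_one, hzero, add_zero, add_comm (e a), add_assoc]

theorem List.prod_map_one_add_of_pairwise_mul_eq_zero {ι R : Type*} [Semiring R] {l : List ι}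
    {e : ι → R} (hl : l.Pairwise fun i j => e i * e j = 0) :
    (l.map fun i => 1 + e i).prod = 1 + (l.map e).sum := by
  induction l with
  | nil => simp
  | cons a l ih =>
    rw [List.pairwise_cons] at hl
    have hzero : e a * (l.map e).sum = 0 := by
      rw [← List.sum_map_mul_left]
      exact List.sum_eq_zero fun x hx => by
        obtain ⟨j, hj, rfl⟩ := List.mem_map.mp hx
        exact hl.1 j hj
    rw [List.map_cons, List.prod_cons, ih hl.2, List.map_cons, List.sum_cons, add_mul, one_mul,
      mul_add, mul_one, hzero, add_zero, add_comm (e a), add_assoc]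

namespace Subgroup

variable {G H : Type*} [Group G] [Group H]

theorem leftInvOn_closure_of_mul_equivariant (f : G →* H) {S : Set G} (hS : ∀ s ∈ S, s⁻¹ ∈ S)
    {T : Set H} (hT : ∀ s ∈ S, ∀ h ∈ T, f s * h ∈ T) (hT1 : 1 ∈ T) (σ : H → G) (hσ1 : σ 1 = 1)
    (hσ : ∀ s ∈ S, ∀ h ∈ T, σ (f s * h) = s * σ h) :
    Set.MapsTo f (closure S) T ∧ Set.LeftInvOn σ f (closure S) := by
  suffices ∀ g ∈ closure S, f g ∈ T ∧ σ (f g) = g from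
    ⟨fun g hg => (this g hg).1, fun g hg => (this g hg).2⟩
  intro g hg
  induction hg using closure_induction_left with
  | one => exact ⟨by rwa [map_one], by rw [map_one, hσ1]⟩
  | mul_left s hs g _ ih =>
    rw [map_mul]
    exact ⟨hT s hs _ ih.1, by rw [hσ s hs _ ih.1, ih.2]⟩
  | inv_mul_cancel s hs g _ ih =>
    rw [map_mul]
    exact ⟨hT _ (hS s hs) _ ih.1, by rw [hσ _ (hS s hs) _ ih.1, ih.2]⟩

theorem bijOn_closure_of_mul_equivariant (f : G →* H) {S : Set G} (hS : ∀ s ∈ S, s⁻¹ ∈ S)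
    {T : Set H} (hT : ∀ s ∈ S, ∀ h ∈ T, f s * h ∈ T) (hT1 : 1 ∈ T) (σ : H → G) (hσ1 : σ 1 = 1)
    (hσ : ∀ s ∈ S, ∀ h ∈ T, σ (f s * h) = s * σ h) (hσT : Set.MapsTo σ T (closure S))
    (hfσ : Set.RightInvOn σ f T) :
    Set.BijOn f (closure S) T :=
  have h := leftInvOn_closure_of_mul_equivariant f hS hT hT1 σ hσ1 hσ
  Set.InvOn.bijOn ⟨h.2, hfσ⟩ h.1 hσT

end Subgroup

namespace Steinberg

variable {n : ℕ} {A : Type*} [Ring A]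

theorem mk_eq_one_of_mem_rels {r : FreeGroup (SteinbergGen n A)} (hr : r ∈ SteinbergRels n A) :
    (PresentedGroup.mk (SteinbergRels n A) r : Steinberg n A) = 1 :=
  (QuotientGroup.eq_one_iff _).mpr (Subgroup.subset_normalClosure hr)

theorem mk_xgen (i j : Fin n) (hij : i ≠ j) (a : A) :
    (PresentedGroup.mk (SteinbergRels n A) (xgen i j hij a) : Steinberg n A) = st_x i j hij a :=
  rfl

theorem st_x_mul_st_x (i j : Fin n) (hij : i ≠ j) (a b : A) :
    st_x i j hij a * st_x i j hij b = st_x i j hij (a + b) :=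
  mul_inv_eq_one.mp <| by
    have h := mk_eq_one_of_mem_rels (Or.inl ⟨i, j, hij, a, b, rfl⟩)
    simp only [map_mul, map_inv, mk_xgen] at h
    exact h

theorem st_x_zero (i j : Fin n) (hij : i ≠ j) : st_x i j hij (0 : A) = 1 :=
  mul_eq_left.mp <| (st_x_mul_st_x i j hij 0 0).trans (by rw [add_zero])

theorem st_x_inv (i j : Fin n) (hij : i ≠ j) (a : A) :
    (st_x i j hij a)⁻¹ = st_x i j hij (-a) :=
  inv_eq_of_mul_eq_one_right <| by rw [st_x_mul_st_x, add_neg_cancel, st_x_zero]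

theorem st_x_commute {i j k l : Fin n} (hij : i ≠ j) (hkl : k ≠ l) (hjk : j ≠ k) (hil : i ≠ l)
    (a b : A) : Commute (st_x i j hij a) (st_x k l hkl b) :=
  commutatorElement_eq_one_iff_commute.mp <| by
    have h := mk_eq_one_of_mem_rels (Or.inr (Or.inl ⟨i, j, k, l, hij, hkl, hjk, hil, a, b, rfl⟩))
    simp only [map_commutatorElement, mk_xgen] at h
    exact h

theorem st_x_mul_st_x_of_ne {i j k : Fin n} (hij : i ≠ j) (hjk : j ≠ k) (hik : i ≠ k) (a b : A) :
    st_x i j hij a * st_x j k hjk b = st_x i k hik (a * b) * st_x j k hjk b * st_x i j hij a := by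
  have h : ⁅st_x i j hij a, st_x j k hjk b⁆ = st_x i k hik (a * b) := mul_inv_eq_one.mp <| by
    have h := mk_eq_one_of_mem_rels (Or.inr (Or.inr ⟨i, j, k, hij, hjk, hik, a, b, rfl⟩))
    simp only [map_mul, map_inv, map_commutatorElement, mk_xgen] at h
    exact h
  rw [← h, commutatorElement_def]
  group

theorem val_transvection' (i j : Fin n) (hij : i ≠ j) (a : A) :
    (transvection' i j hij a).val = 1 + single i j a :=
  rfl

theorem transvection'_mul_transvection' (i j : Fin n) (hij : i ≠ j) (a b : A) :
    transvection' i j hij a * transvection' i j hij b = transvection' i j hij (a + b) := by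
  ext : 1
  simp only [Units.val_mul, val_transvection', Matrix.mul_add, Matrix.add_mul, Matrix.one_mul,
    Matrix.mul_one, single_mul_single_of_ne _ _ _ _ hij.symm, single_add]
  abel

theorem transvection'_commute {i j k l : Fin n} (hij : i ≠ j) (hkl : k ≠ l) (hjk : j ≠ k)
    (hil : i ≠ l) (a b : A) : Commute (transvection' i j hij a) (transvection' k l hkl b) := by
  ext : 1
  simp only [Units.val_mul, val_transvection', Matrix.mul_add, Matrix.add_mul, Matrix.one_mul,
    Matrix.mul_one, single_mul_single_of_ne _ _ _ _ hjk, single_mul_single_of_ne _ _ _ _ hil.symm]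
  abel

theorem transvection'_mul_transvection'_of_ne {i j k : Fin n} (hij : i ≠ j) (hjk : j ≠ k)
    (hik : i ≠ k) (a b : A) :
    transvection' i j hij a * transvection' j k hjk b =
      transvection' i k hik (a * b) * transvection' j k hjk b * transvection' i j hij a := by
  ext : 1
  simp only [Units.val_mul, val_transvection', Matrix.mul_add, Matrix.add_mul, Matrix.one_mul,
    Matrix.mul_one, single_mul_single_same, single_mul_single_of_ne _ _ _ _ hjk.symm,
    single_mul_single_of_ne _ _ _ _ hik.symm, add_zero]
  abel

def transvectionOfGen (g : SteinbergGen n A) : (Matrix (Fin n) (Fin n) A)ˣ :=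
  transvection' g.1.1.1 g.1.1.2 g.1.2 g.2

theorem lift_transvectionOfGen_xgen (i j : Fin n) (hij : i ≠ j) (a : A) :
    FreeGroup.lift transvectionOfGen (xgen i j hij a) = transvection' i j hij a :=
  FreeGroup.lift_apply_of

theorem lift_transvectionOfGen_eq_one_of_mem_rels :
    ∀ r ∈ SteinbergRels n A, FreeGroup.lift (transvectionOfGen (n := n) (A := A)) r = 1 := by
  rintro r (⟨i, j, hij, a, b, rfl⟩ | ⟨i, j, k, l, hij, hkl, hjk, hil, a, b, rfl⟩ |
    ⟨i, j, k, hij, hjk, hik, a, b, rfl⟩) <;>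
    simp only [map_mul, map_inv, map_commutatorElement, lift_transvectionOfGen_xgen]
  · rw [mul_inv_eq_one, transvection'_mul_transvection']
  · exact commutatorElement_eq_one_iff_commute.mpr (transvection'_commute hij hkl hjk hil a b)
  · rw [mul_inv_eq_one, commutatorElement_def, transvection'_mul_transvection'_of_ne hij hjk hik]
    group

def stHom : Steinberg n A →* (Matrix (Fin n) (Fin n) A)ˣ :=
  PresentedGroup.toGroup lift_transvectionOfGen_eq_one_of_mem_rels

theorem stHom_st_x (i j : Fin n) (hij : i ≠ j) (a : A) :
    stHom (st_x i j hij a) = transvection' i j hij a :=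
  PresentedGroup.toGroup.of lift_transvectionOfGen_eq_one_of_mem_rels

theorem st_x_commute_of_same_col {i j c : Fin n} (hi : i ≠ c) (hj : j ≠ c) (a b : A) :
    Commute (st_x i c hi a) (st_x j c hj b) :=
  st_x_commute hi hj hj.symm hi a b

def colProd (c : Fin n) (v : Fin n → A) : Steinberg n A :=
  (Finset.univ : Finset {i // i < c}).noncommProd (fun i => st_x i c i.2.ne (v i))
    (Set.pairwise_of_forall _ _ fun i j => st_x_commute_of_same_col i.2.ne j.2.ne _ _)

theorem colProd_add (c : Fin n) (v w : Fin n → A) :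
    colProd c (v + w) = colProd c v * colProd c w := by
  simp only [colProd, Pi.add_apply, ← st_x_mul_st_x]
  exact Finset.noncommProd_mul_distrib (fun i : {i // i < c} => st_x i c i.2.ne (v i))
    (fun i => st_x i c i.2.ne (w i)) _ _
    (Set.pairwise_of_forall _ _ fun i j => st_x_commute_of_same_col i.2.ne j.2.ne _ _)

theorem colProd_eq_one {c : Fin n} {v : Fin n → A} (hv : ∀ i < c, v i = 0) : colProd c v = 1 := by
  rw [colProd, Finset.noncommProd_eq_pow_card _ _ _ 1 fun i _ => by rw [hv i i.2, st_x_zero],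
    one_pow]

theorem colProd_single {p c : Fin n} (hpc : p < c) (b : A) :
    colProd c (Pi.single p b) = st_x p c hpc.ne b := by
  rw [colProd, ← Finset.mul_noncommProd_erase _ (Finset.mem_univ ⟨p, hpc⟩), Pi.single_eq_same]
  refine mul_eq_left.mpr <| Finset.noncommProd_induction _ _ _ (· = 1)
    (fun x y hx hy => by rw [hx, hy, mul_one]) rfl fun i hi => ?_
  rw [Pi.single_eq_of_ne (Subtype.coe_injective.ne (Finset.ne_of_mem_erase hi)), st_x_zero]

theorem colProd_single_add {p c : Fin n} (hpc : p < c) (b : A) (v : Fin n → A) :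
    colProd c (Pi.single p b + v) = st_x p c hpc.ne b * colProd c v := by
  rw [colProd_add, colProd_single hpc]

theorem commute_colProd {c : Fin n} {v : Fin n → A} {y : Steinberg n A}
    (hy : ∀ i (hi : i < c), Commute y (st_x i c hi.ne (v i))) : Commute y (colProd c v) :=
  Finset.noncommProd_commute _ _ _ _ fun i _ => hy i i.2

theorem st_x_mul_colProd {p q c : Fin n} (hpq : p < q) (hqc : q < c) (a : A) (v : Fin n → A) :
    st_x p q hpq.ne a * colProd c v =
      colProd c (Pi.single p (a * v q) + v) * st_x p q hpq.ne a := by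
  have hpc : p < c := hpq.trans hqc
  set w := v - Pi.single q (v q)
  have hv : colProd c v = st_x q c hqc.ne (v q) * colProd c w := by
    rw [← colProd_single_add hqc, add_sub_cancel]
  have hw : Commute (st_x p q hpq.ne a) (colProd c w) := by
    refine commute_colProd fun i hi => ?_
    by_cases hiq : i = q
    · subst hiq
      rw [show w i = 0 by simp [w], st_x_zero]
      exact Commute.one_right _
    · exact st_x_commute hpq.ne hi.ne (Ne.symm hiq) hpc.ne a _
  calc st_x p q hpq.ne a * colProd c v
      = st_x p c hpc.ne (a * v q) * st_x q c hqc.ne (v q) * (st_x p q hpq.ne a * colProd c w) := by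
        rw [hv, ← mul_assoc, st_x_mul_st_x_of_ne, mul_assoc _ (st_x p q _ a)]
    _ = st_x p c hpc.ne (a * v q) * colProd c v * st_x p q hpq.ne a := by
        rw [hw.eq, hv]
        simp only [mul_assoc]
    _ = colProd c (Pi.single p (a * v q) + v) * st_x p q hpq.ne a := by
        rw [colProd_single_add hpc]

theorem transpose_one_add_single_mul (p q c : Fin n) (a : A) (M : Matrix (Fin n) (Fin n) A) :
    ((1 + single p q a) * M)ᵀ c = Pi.single p (a * M q c) + Mᵀ c := by
  ext i
  rcases eq_or_ne i p with rfl | hip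
  · simp [Matrix.add_mul, single_mul_apply_same, add_comm]
  · simp [Matrix.add_mul, single_mul_apply_of_ne _ _ _ _ _ hip, hip]

theorem transvection'_mul_mem_UnitriSet {p q : Fin n} (hpq : p < q) (a : A)
    {u : (Matrix (Fin n) (Fin n) A)ˣ} (hu : u ∈ UnitriSet n A) :
    transvection' p q hpq.ne a * u ∈ UnitriSet n A := by
  have h (x y : Fin n) : (transvection' p q hpq.ne a * u).val x y =
      (Pi.single p (a * u.val q y) : Fin n → A) x + u.val x y :=
    congrFun (transpose_one_add_single_mul p q y a u.val) x
  refine ⟨fun x => ?_, fun x y hyx => ?_⟩ <;> rw [h] <;> rcases eq_or_ne x p with rfl | hxp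
  · rw [Pi.single_eq_same, hu.2 q x hpq, mul_zero, zero_add, hu.1]
  · rw [Pi.single_eq_of_ne hxp, zero_add, hu.1]
  · rw [Pi.single_eq_same, hu.2 q y (hyx.trans hpq), hu.2 x y hyx, mul_zero, add_zero]
  · rw [Pi.single_eq_of_ne hxp, hu.2 x y hyx, add_zero]

theorem val_stHom_colProd (c : Fin n) (v : Fin n → A) :
    (stHom (colProd c v)).val = 1 + ∑ i : {i // i < c}, single (i : Fin n) c (v i) := by
  rw [colProd, ← Units.coeHom_apply, ← MonoidHom.comp_apply, Finset.map_noncommProd]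
  simp only [MonoidHom.comp_apply, stHom_st_x, Units.coeHom_apply, val_transvection']
  exact Finset.noncommProd_one_add_of_mul_eq_zero _ _
    (fun i _ j _ => single_mul_single_of_ne _ _ _ _ j.2.ne' _) _

theorem colProd_mem_Uplus (c : Fin n) (v : Fin n → A) : colProd c v ∈ Uplus n A :=
  Finset.noncommProd_induction _ _ _ (· ∈ Uplus n A) (fun _ _ => mul_mem) (one_mem _)
    fun i _ => Subgroup.subset_closure ⟨i, c, i.2, v i, rfl⟩

theorem st_x_mul_prod_colProd {p q : Fin n} (hpq : p < q) (a : A) {M : Matrix (Fin n) (Fin n) A}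
    (hqq : M q q = 1) (hq : ∀ c < q, M q c = 0) {l : List (Fin n)} (hl : l.Pairwise (· > ·))
    (hql : q ∈ l) :
    st_x p q hpq.ne a * (l.map fun c => colProd c (Mᵀ c)).prod =
      (l.map fun c => colProd c (Pi.single p (a * M q c) + Mᵀ c)).prod := by
  induction l with
  | nil => simp at hql
  | cons c l ih =>
    rw [List.pairwise_cons] at hl
    simp only [List.map_cons, List.prod_cons]
    rcases eq_or_ne c q with rfl | hcq
    · rw [← mul_assoc, ← colProd_single_add hpq, hqq, mul_one]
      refine congrArg (_ * List.prod ·) (List.map_congr_left fun d hd => ?_)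
      rw [hq d (hl.1 d hd), mul_zero, Pi.single_zero, zero_add]
    · have hql' : q ∈ l := (List.mem_cons.mp hql).resolve_left hcq.symm
      rw [← mul_assoc, st_x_mul_colProd hpq (hl.1 q hql') a, transpose_apply, mul_assoc,
        ih hl.2 hql']

def upperSection (M : Matrix (Fin n) (Fin n) A) : Steinberg n A :=
  ((List.finRange n).reverse.map fun c => colProd c (Mᵀ c)).prod

theorem pairwise_gt_finRange_reverse : (List.finRange n).reverse.Pairwise (· > ·) :=
  List.pairwise_reverse.mpr (List.pairwise_lt_finRange n)

theorem upperSection_one_add_single_mul {p q : Fin n} (hpq : p < q) (a : A)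
    {M : Matrix (Fin n) (Fin n) A} (hqq : M q q = 1) (hq : ∀ c < q, M q c = 0) :
    upperSection ((1 + single p q a) * M) = st_x p q hpq.ne a * upperSection M := by
  simp only [upperSection, transpose_one_add_single_mul]
  rw [st_x_mul_prod_colProd hpq a hqq hq pairwise_gt_finRange_reverse
    (List.mem_reverse.mpr (List.mem_finRange q))]

theorem upperSection_one : upperSection (1 : Matrix (Fin n) (Fin n) A) = 1 :=
  List.prod_eq_one fun x hx => by
    obtain ⟨c, -, rfl⟩ := List.mem_map.mp hx
    exact colProd_eq_one fun i hi => one_apply_ne hi.ne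

theorem upperSection_mem_Uplus (M : Matrix (Fin n) (Fin n) A) : upperSection M ∈ Uplus n A :=
  list_prod_mem fun x hx => by
    obtain ⟨c, -, rfl⟩ := List.mem_map.mp hx
    exact colProd_mem_Uplus c _

theorem sum_single_upper_apply (M : Matrix (Fin n) (Fin n) A) (x y : Fin n) :
    (∑ c, ∑ i : {i // i < c}, single (i : Fin n) c (M i c)) x y = if x < y then M x y else 0 := by
  simp only [Matrix.sum_apply, single_apply]
  rw [Finset.sum_eq_single y (fun c _ hc => Finset.sum_eq_zero fun i _ => if_neg fun h => hc h.2)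
    (by simp)]
  split_ifs with hxy
  · rw [Finset.sum_eq_single ⟨x, hxy⟩ (fun i _ hi => if_neg fun h => hi (Subtype.ext h.1))
      (by simp), if_pos ⟨rfl, rfl⟩]
  · exact Finset.sum_eq_zero fun i _ => if_neg <| by rintro ⟨rfl, -⟩; exact hxy i.2

theorem val_stHom_upperSection (M : Matrix (Fin n) (Fin n) A) :
    (stHom (upperSection M)).val = 1 + ∑ c, ∑ i : {i // i < c}, single (i : Fin n) c (M i c) := by
  rw [upperSection, ← Units.coeHom_apply, map_list_prod, map_list_prod, List.map_map,
    List.map_map]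
  simp only [Function.comp_def, Units.coeHom_apply, val_stHom_colProd, transpose_apply]
  rw [List.prod_map_one_add_of_pairwise_mul_eq_zero, List.map_reverse, List.sum_reverse,
    Fin.sum_univ_def]
  refine pairwise_gt_finRange_reverse.imp fun {c d} hdc => ?_
  rw [Finset.sum_mul_sum]
  exact Finset.sum_eq_zero fun i _ => Finset.sum_eq_zero fun j _ =>
    single_mul_single_of_ne _ _ _ _ (j.2.trans hdc).ne' _

theorem stHom_upperSection {u : (Matrix (Fin n) (Fin n) A)ˣ} (hu : u ∈ UnitriSet n A) :
    stHom (upperSection u.val) = u := by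
  ext x y
  rw [val_stHom_upperSection, Matrix.add_apply, sum_single_upper_apply]
  rcases lt_trichotomy x y with hxy | rfl | hyx
  · rw [if_pos hxy, one_apply_ne hxy.ne, zero_add]
  · rw [if_neg (lt_irrefl x), one_apply_eq, add_zero, hu.1]
  · rw [if_neg (asymm hyx), one_apply_ne hyx.ne', add_zero, hu.2 x y hyx]

theorem bijOn_stHom_Uplus : Set.BijOn stHom (Uplus n A : Set (Steinberg n A)) (UnitriSet n A) := by
  refine Subgroup.bijOn_closure_of_mul_equivariant stHom ?_ ?_
    ⟨fun x => one_apply_eq x, fun _ _ h => one_apply_ne h.ne'⟩ (fun u => upperSection u.val)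
    upperSection_one ?_ (fun u _ => upperSection_mem_Uplus u.val) fun u hu => stHom_upperSection hu
  · rintro _ ⟨i, j, hij, a, rfl⟩
    exact ⟨i, j, hij, -a, st_x_inv i j hij.ne a⟩
  · rintro _ ⟨i, j, hij, a, rfl⟩ u hu
    rw [stHom_st_x]
    exact transvection'_mul_mem_UnitriSet hij a hu
  · rintro _ ⟨i, j, hij, a, rfl⟩ u hu
    rw [stHom_st_x]
    exact upperSection_one_add_single_mul hij a (hu.1 j) fun c hc => hu.2 j c hc

end Steinberg

theorem stmt13_general (n : ℕ) (A : Type*) [Ring A] :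
    ∃ st : Steinberg n A →* (Matrix (Fin n) (Fin n) A)ˣ,
      (∀ (i j : Fin n) (hij : i ≠ j) (a : A), st (st_x i j hij a) = transvection' i j hij a) ∧
      Set.InjOn st (Uplus n A : Set (Steinberg n A)) ∧
      st '' (Uplus n A : Set (Steinberg n A)) = UnitriSet n A :=
  ⟨Steinberg.stHom, Steinberg.stHom_st_x, Steinberg.bijOn_stHom_Uplus.injOn,
    Steinberg.bijOn_stHom_Uplus.image_eq⟩

theorem stmt13 (n : ℕ) (A : Type*) [Ring A] (hn : 2 ≤ n) :
    ∃ st : Steinberg n A →* (Matrix (Fin n) (Fin n) A)ˣ,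
      (∀ (i j : Fin n) (hij : i ≠ j) (a : A), st (st_x i j hij a) = transvection' i j hij a) ∧
      Set.InjOn st (Uplus n A : Set (Steinberg n A)) ∧
      st '' (Uplus n A : Set (Steinberg n A)) = UnitriSet n A :=
  stmt13_general n A
end

section
/- Let K be a commutative ring, A a unital K-algebra that is a finitely generated K-module, and K local. Then A is semi-local, i.e. A/Jac(A) is a semi-simple ring. -/
/-!
Every element `r` of `Jac(K)` acts on a simple `A`-module `S` by an `A`-linear endomorphism
(it is central), so by Schur's lemma it acts by zero or bijectively; the latter would give
`S = r • S`, impossible by Nakayama since `S` is a nonzero finitely generated `K`-module. Hence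
`Jac(K)` maps into `Jac(A)`, so `A / Jac(A)` is a finite module over the field `K / Jac(K)`.
It is therefore an Artinian ring with zero Jacobson radical, i.e. semisimple.
-/

open scoped Pointwise

theorem IsSimpleModule.smul_eq_zero_of_mem_jacobson {R A S : Type*} [CommRing R] [Ring A]
    [Algebra R A] [AddCommGroup S] [Module A S] [Module R S] [IsScalarTower R A S]
    [Module.Finite R S] [IsSimpleModule A S] {r : R} (hr : r ∈ Ring.jacobson R) (x : S) :
    r • x = 0 := by
  have := IsSimpleModule.nontrivial A S
  rcases LinearMap.bijective_or_eq_zero (DistribSMul.toLinearMap A S r) with hbij | hzero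
  · refine absurd ?_ (Submodule.top_ne_pointwise_smul_of_mem_jacobson_annihilator (M := S)
      (Ideal.jacobson_mono bot_le (Ideal.jacobson_bot (R := R) ▸ hr)))
    rw [Submodule.pointwise_smul_def, Submodule.map_top, eq_comm, LinearMap.range_eq_top]
    exact hbij.2
  · exact LinearMap.congr_fun hzero x

namespace Ring

variable {R A : Type*} [CommRing R] [Ring A] [Algebra R A]

theorem algebraMap_mem_jacobson [Module.Finite R A] {r : R} (hr : r ∈ jacobson R) :
    algebraMap R A r ∈ jacobson A := by
  rw [jacobson_eq_sInf_isMaximal, Submodule.mem_sInf]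
  intro I hI
  have : IsSimpleModule A (A ⧸ I) := isSimpleModule_iff_isCoatom.mpr (Ideal.isMaximal_def.mp hI)
  have hr1 :=
    IsSimpleModule.smul_eq_zero_of_mem_jacobson (A := A) hr (Submodule.Quotient.mk (p := I) 1)
  rwa [← Submodule.Quotient.mk_smul, Submodule.Quotient.mk_eq_zero,
    ← Algebra.algebraMap_eq_smul_one] at hr1

variable (R A)

theorem isTorsionBySet_quotient_jacobson [Module.Finite R A] :
    Module.IsTorsionBySet R (A ⧸ jacobson A) (jacobson R) := by
  rintro x ⟨r, hr⟩
  induction x using Submodule.Quotient.induction_on with | H a => ?_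
  rw [← Submodule.Quotient.mk_smul, Submodule.Quotient.mk_eq_zero, Algebra.smul_def]
  exact Ideal.mul_mem_right a _ (algebraMap_mem_jacobson hr)

theorem isArtinianRing_quotient_jacobson [Module.Finite R A] [IsArtinianRing (R ⧸ jacobson R)] :
    IsArtinianRing (A ⧸ jacobson A) := by
  let := (isTorsionBySet_quotient_jacobson R A).module
  have : Module.Finite (R ⧸ jacobson R) (A ⧸ jacobson A) := .of_restrictScalars_finite R _ _
  have : IsArtinian R (A ⧸ jacobson A) :=
    isArtinian_of_surjective_algebraMap (Ideal.Quotient.mk_surjective (I := jacobson R))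
  exact isArtinian_of_tower R this

theorem isSemisimpleRing_quotient_jacobson [Module.Finite R A]
    [IsArtinianRing (R ⧸ jacobson R)] : IsSemisimpleRing (A ⧸ jacobson A) :=
  have := isArtinianRing_quotient_jacobson R A
  IsArtinianRing.isSemisimpleRing_iff_jacobson.mpr (jacobson_quotient_jacobson A)

end Ring

theorem TwoSidedIdeal.ringCon_jacobson_bot (A : Type*) [Ring A] :
    (⊥ : TwoSidedIdeal A).jacobson.ringCon = Ideal.Quotient.ringCon (Ring.jacobson A) := by
  ext x y
  rw [rel_iff, ← mem_asIdeal, asIdeal_jacobson, bot_asIdeal, Ideal.jacobson_bot]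
  exact (Submodule.quotientRel_def _).symm

theorem stmt16 (K : Type*) [CommRing K] [IsLocalRing K]
    (A : Type*) [Ring A] [Algebra K A] [Module.Finite K A] :
    IsSemisimpleRing ((⊥ : TwoSidedIdeal A).jacobson.ringCon.Quotient) := by
  have : (Ring.jacobson K).IsMaximal :=
    IsLocalRing.ringJacobson_eq_maximalIdeal (R := K) ▸ IsLocalRing.maximalIdeal.isMaximal K
  let := Ideal.Quotient.field (Ring.jacobson K)
  rw [TwoSidedIdeal.ringCon_jacobson_bot]
  exact Ring.isSemisimpleRing_quotient_jacobson K A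
end

section
/- Let G, H be groups with H perfect, d : H → G a homomorphism with ker d central in H, and g ∈ G. Then there is at most one automorphism φ of H satisfying d(φ(h)) = g·d(h)·g⁻¹ for all h ∈ H. -/
/-!
If `φ` and `ψ` both lift conjugation by `g` through `d`, then `h ↦ φ h * (ψ h)⁻¹` takes values in
`ker d`, hence in the center of `H`. Centrality makes this map a homomorphism into an abelian
group, so it kills the commutator subgroup, which is all of `H`; thus `φ = ψ`.
-/

namespace MonoidHom

variable {G H K : Type*} [Group G] [Group H] [Group K]

open scoped IsMulCommutative in
theorem eq_one_of_commutator_eq_top {A : Type*} [Group A] [IsMulCommutative A]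
    (hperf : commutator H = ⊤) (f : H →* A) : f = 1 := by
  ext x
  exact Abelianization.commutator_subset_ker f (hperf ▸ Subgroup.mem_top x)

theorem mul_inv_mem_center_of_comp_eq {d : K →* G} (hker : d.ker ≤ Subgroup.center K)
    {f₁ f₂ : H →* K} (hd : d.comp f₁ = d.comp f₂) (x : H) :
    f₁ x * (f₂ x)⁻¹ ∈ Subgroup.center K := by
  refine hker (mem_ker.mpr ?_)
  rw [map_mul, map_inv, ← comp_apply, hd, comp_apply, mul_inv_cancel]

def centralDiff (f₁ f₂ : H →* K) (hc : ∀ x, f₁ x * (f₂ x)⁻¹ ∈ Subgroup.center K) :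
    H →* Subgroup.center K :=
  MonoidHom.mk' (fun x => ⟨f₁ x * (f₂ x)⁻¹, hc x⟩) fun a b => by
    ext
    have hb := Subgroup.mem_center_iff.mp (hc b) (f₂ a)
    calc f₁ (a * b) * (f₂ (a * b))⁻¹
        = f₁ a * (f₂ a)⁻¹ * (f₂ a * (f₁ b * (f₂ b)⁻¹)) * (f₂ a)⁻¹ := by simp only [map_mul]; group
      _ = f₁ a * (f₂ a)⁻¹ * (f₁ b * (f₂ b)⁻¹) := by rw [hb]; group

theorem eq_of_comp_eq_of_ker_le_center (hperf : commutator H = ⊤) {d : K →* G}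
    (hker : d.ker ≤ Subgroup.center K) {f₁ f₂ : H →* K} (hd : d.comp f₁ = d.comp f₂) :
    f₁ = f₂ := by
  have hc := mul_inv_mem_center_of_comp_eq hker hd
  ext x
  have hx := DFunLike.congr_fun (eq_one_of_commutator_eq_top hperf (centralDiff f₁ f₂ hc)) x
  exact mul_inv_eq_one.mp (congrArg Subtype.val hx)

end MonoidHom

theorem stmt19 {G H : Type*} [Group G] [Group H]
    (hperf : commutator H = ⊤) (d : H →* G)
    (hker : ∀ h : H, h ∈ d.ker → h ∈ Subgroup.center H) (g : G)
    (φ ψ : MulAut H)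
    (hφ : ∀ h : H, d (φ h) = g * d h * g⁻¹)
    (hψ : ∀ h : H, d (ψ h) = g * d h * g⁻¹) :
    φ = ψ := by
  refine MulEquiv.toMonoidHom_injective (MonoidHom.eq_of_comp_eq_of_ker_le_center hperf hker ?_)
  ext h
  simp only [MonoidHom.comp_apply, MulEquiv.coe_toMonoidHom, hφ, hψ]
end
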